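/- (Antichain normal form.) Let T=(V,E) be an unweighted tree with deterministic Graph-IRV, let u∈V and A⊆V\{u}, and root T at u. If Kill(T,u,A) holds, then there exists a witness candidate set K={u}∪F with F⊆A such that F is an antichain with respect to the ancestor–descendant relation of T rooted at u (no element of F is a proper ancestor of another element of F), and u is eliminated in round 1 of the IRV execution on K. -/

import Mathlib

section IRVCore

variable {V : Type*} [Fintype V] [DecidableEq V] [Nonempty V]

/-- The preference key of voter `x` for candidate `c`: lexicographic in
(distance, candidate id), smaller preferred. -/
def voterKey (d : V → V → ℕ) (idv : V → ℕ) (x c : V) : Lex (ℕ × ℕ) :=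
  toLex (d x c, idv c)

/-- Voter `x`'s top remaining candidate among the candidate set `K`. -/
noncomputable def topChoice (d : V → V → ℕ) (idv : V → ℕ) (x : V) (K : Finset V) : V :=
  if h : K.Nonempty then (Finset.exists_min_image K (voterKey d idv x) h).choose
  else Classical.arbitrary V

/-- Plurality score of candidate `c` within candidate set `K`. -/
noncomputable def plurality (d : V → V → ℕ) (idv : V → ℕ) (K : Finset V) (c : V) : ℕ :=
  (Finset.univ.filter fun x : V => topChoice d idv x K = c).card

/-- Elimination key: minimize plurality score, break ties toward the largest id. -/
noncomputable def elimKey (d : V → V → ℕ) (idv : V → ℕ) (K : Finset V) (c : V) :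
    Lex (ℤ × ℤ) :=
  toLex ((plurality d idv K c : ℤ), -(idv c : ℤ))

/-- The candidate eliminated in the current round. -/
noncomputable def roundLoser (d : V → V → ℕ) (idv : V → ℕ) (K : Finset V) : V :=
  if h : K.Nonempty then (Finset.exists_min_image K (elimKey d idv K) h).choose
  else Classical.arbitrary V

lemma roundLoser_mem (d : V → V → ℕ) (idv : V → ℕ) {K : Finset V} (h : K.Nonempty) :
    roundLoser d idv K ∈ K := by
  unfold roundLoser
  rw [dif_pos h]
  exact (Finset.exists_min_image K (elimKey d idv K) h).choose_spec.1

/-- The IRV winner on candidate set `K`. -/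
noncomputable def irvWinner (d : V → V → ℕ) (idv : V → ℕ) (K : Finset V) : V :=
  if h : 2 ≤ K.card then irvWinner d idv (K.erase (roundLoser d idv K))
  else if h2 : K.Nonempty then h2.choose else Classical.arbitrary V
termination_by K.card
decreasing_by
  exact Finset.card_erase_lt_of_mem (roundLoser_mem d idv (Finset.card_pos.mp (by omega)))

/-- `Kill d idv u A`: some candidate set `K` with `u ∈ K ⊆ A ∪ {u}` makes `u` lose. -/
def Kill (d : V → V → ℕ) (idv : V → ℕ) (u : V) (A : Set V) : Prop :=
  ∃ K : Finset V, u ∈ K ∧ ↑K ⊆ insert u A ∧ irvWinner d idv K ≠ u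

/-- `S` is an IRV exclusion zone. -/
def ExclusionZone (d : V → V → ℕ) (idv : V → ℕ) (S : Set V) : Prop :=
  ∀ K : Finset V, K.Nonempty → (∃ c ∈ K, c ∈ S) → irvWinner d idv K ∈ S

end IRVCore

/-- In a tree with distance function `d`, rooted at `u`: vertex `a` is an ancestor of `b`
(i.e. `a` lies on the unique path from the root `u` to `b`). -/
def IsAncestor {V : Type*} (d : V → V → ℕ) (u a b : V) : Prop :=
  d u a + d a b = d u b

/-!
Run IRV from a killing candidate set until the round in which `u` is eliminated, at candidate
set `K`, and let `F` be the topmost elements of `K \ {u}` (those without a proper ancestor in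
`K \ {u}`); `F` is an antichain. Dropping candidates never lowers the score of a remaining one,
so each `a ∈ F` scores at least as much on `{u} ∪ F` as on `K`. Nor does `u` gain voters: if `x`
weakly prefers `u` to `a ∈ F` and `c` lies strictly below `a`, then by the median property of
trees `a` lies on the path from `x` to `u` or on the path from `x` to `c`, and either way `x` is
strictly closer to `u` than to `c`. Hence `u` still has the smallest elimination key on
`{u} ∪ F`, is eliminated in round 1, and the winner is then an element of `F`.
-/

namespace SimpleGraph

variable {V : Type*} {G : SimpleGraph V}

lemma Walk.dist_add_dist_le_length [DecidableEq V] {x c a : V} (p : G.Walk x c)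
    (ha : a ∈ p.support) : G.dist x a + G.dist a c ≤ p.length :=
  calc G.dist x a + G.dist a c ≤ (p.takeUntil a ha).length + (p.dropUntil a ha).length :=
        add_le_add (dist_le _) (dist_le _)
    _ = p.length := by rw [← Walk.length_append, p.take_spec ha]

lemma IsTree.mem_support_of_dist_add_dist_eq [DecidableEq V] (hG : G.IsTree) {u a c : V}
    (h : G.dist u a + G.dist a c = G.dist u c) (p : G.Walk u c) : a ∈ p.support := by
  obtain ⟨q₁, hq₁⟩ := hG.connected.exists_walk_length_eq_dist u a
  obtain ⟨q₂, hq₂⟩ := hG.connected.exists_walk_length_eq_dist a c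
  have hq : (q₁.append q₂).IsPath :=
    (q₁.append q₂).isPath_of_length_eq_dist (by rw [Walk.length_append, hq₁, hq₂, h])
  have hbypass : p.bypass = q₁.append q₂ := congrArg Subtype.val <|
    (hG.isAcyclic.subsingleton_path u c).elim ⟨p.bypass, p.bypass_isPath⟩ ⟨_, hq⟩
  apply p.support_bypass_subset_support
  rw [hbypass, Walk.mem_support_append_iff]
  exact Or.inl q₁.end_mem_support

/-- The median property of trees. -/
lemma IsTree.dist_add_dist_eq_or (hG : G.IsTree) {u a c : V}
    (h : G.dist u a + G.dist a c = G.dist u c) (x : V) :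
    G.dist x a + G.dist a u = G.dist x u ∨ G.dist x a + G.dist a c = G.dist x c := by
  classical
  obtain ⟨p, hp⟩ := hG.connected.exists_walk_length_eq_dist x u
  obtain ⟨q, hq⟩ := hG.connected.exists_walk_length_eq_dist x c
  have ha := hG.mem_support_of_dist_add_dist_eq h (p.reverse.append q)
  rw [Walk.mem_support_append_iff, Walk.support_reverse, List.mem_reverse] at ha
  rcases ha with ha | ha
  · have := p.dist_add_dist_le_length ha
    have := hG.connected.dist_triangle (u := x) (v := a) (w := u)
    omega
  · have := q.dist_add_dist_le_length ha
    have := hG.connected.dist_triangle (u := x) (v := a) (w := c)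
    omega

lemma IsTree.dist_lt_of_isAncestor (hG : G.IsTree) {u a c x : V}
    (hanc : IsAncestor G.dist u a c) (hau : a ≠ u) (hac : a ≠ c)
    (hx : G.dist x u ≤ G.dist x a) : G.dist x u < G.dist x c := by
  have hau' := hG.connected.pos_dist_of_ne hau
  have hac' := hG.connected.pos_dist_of_ne hac
  rcases hG.dist_add_dist_eq_or hanc x with h | h <;> omega

lemma isAncestor_dist_self (u a : V) : IsAncestor G.dist u a a := by
  simp [IsAncestor]

lemma Connected.isAncestor_trans (hG : G.Connected) {u a b c : V}
    (hab : IsAncestor G.dist u a b) (hbc : IsAncestor G.dist u b c) :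
    IsAncestor G.dist u a c := by
  unfold IsAncestor at *
  have := hG.dist_triangle (u := u) (v := a) (w := c)
  have := hG.dist_triangle (u := a) (v := b) (w := c)
  omega

lemma Connected.dist_lt_of_isAncestor (hG : G.Connected) {u a b : V}
    (hab : IsAncestor G.dist u a b) (hne : a ≠ b) : G.dist u a < G.dist u b := by
  have := hG.pos_dist_of_ne hne
  unfold IsAncestor at hab
  omega

end SimpleGraph

section AncestorMinimals

variable {V : Type*}

open scoped Classical in
noncomputable def ancestorMinimals (d : V → V → ℕ) (u : V) (S : Finset V) : Finset V :=
  S.filter fun b => ∀ a ∈ S, a ≠ b → ¬ IsAncestor d u a b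

lemma mem_ancestorMinimals {d : V → V → ℕ} {u b : V} {S : Finset V} :
    b ∈ ancestorMinimals d u S ↔ b ∈ S ∧ ∀ a ∈ S, a ≠ b → ¬ IsAncestor d u a b := by
  classical
  rw [ancestorMinimals, Finset.mem_filter]

lemma ancestorMinimals_subset (d : V → V → ℕ) (u : V) (S : Finset V) :
    ancestorMinimals d u S ⊆ S :=
  fun _ hb => (mem_ancestorMinimals.1 hb).1

/-- An ancestor of `c` in `S` that is closest to the root is topmost. -/
lemma SimpleGraph.Connected.exists_mem_ancestorMinimals_isAncestor {G : SimpleGraph V}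
    (hG : G.Connected) (u : V) {S : Finset V} {c : V} (hc : c ∈ S) :
    ∃ a ∈ ancestorMinimals G.dist u S, IsAncestor G.dist u a c := by
  classical
  obtain ⟨a, ha, hmin⟩ := (S.filter (IsAncestor G.dist u · c)).exists_min_image (G.dist u)
    ⟨c, Finset.mem_filter.2 ⟨hc, SimpleGraph.isAncestor_dist_self u c⟩⟩
  rw [Finset.mem_filter] at ha
  refine ⟨a, mem_ancestorMinimals.2 ⟨ha.1, fun b hb hba hab => ?_⟩, ha.2⟩
  have := hmin b (Finset.mem_filter.2 ⟨hb, hG.isAncestor_trans hab ha.2⟩)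
  have := hG.dist_lt_of_isAncestor hab hba
  omega

end AncestorMinimals

section TopChoice

variable {V : Type*} {d : V → V → ℕ} {idv : V → ℕ}

lemma voterKey_injective (hid : Function.Injective idv) (x : V) :
    Function.Injective (voterKey d idv x) :=
  fun _ _ h => hid (congrArg Prod.snd (toLex.injective h))

variable [Nonempty V]

lemma topChoice_spec (x : V) {K : Finset V} (hK : K.Nonempty) :
    topChoice d idv x K ∈ K ∧
      ∀ c ∈ K, voterKey d idv x (topChoice d idv x K) ≤ voterKey d idv x c := by
  rw [topChoice, dif_pos hK]
  exact (K.exists_min_image _ hK).choose_spec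

lemma topChoice_eq_of_forall_le (hid : Function.Injective idv) {x c : V} {K : Finset V}
    (hc : c ∈ K) (h : ∀ c' ∈ K, voterKey d idv x c ≤ voterKey d idv x c') :
    topChoice d idv x K = c :=
  have hspec := topChoice_spec x ⟨c, hc⟩
  voterKey_injective hid x (le_antisymm (hspec.2 c hc) (h _ hspec.1))

lemma topChoice_eq_of_subset (hid : Function.Injective idv) {x : V} {K K' : Finset V}
    (hKK' : K ⊆ K') (hK : K.Nonempty)
    (hdom : ∀ c ∈ K', ∃ a ∈ K, voterKey d idv x a ≤ voterKey d idv x c) :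
    topChoice d idv x K' = topChoice d idv x K :=
  have hspec := topChoice_spec x hK
  topChoice_eq_of_forall_le hid (hKK' hspec.1) fun c hc =>
    let ⟨a, ha, hac⟩ := hdom c hc
    (hspec.2 a ha).trans hac

end TopChoice

section IRV

variable {V : Type*} [Fintype V] [DecidableEq V] [Nonempty V] {d : V → V → ℕ} {idv : V → ℕ}

lemma elimKey_injective (hid : Function.Injective idv) (K : Finset V) :
    Function.Injective (elimKey d idv K) :=
  fun _ _ h => hid (by exact_mod_cast neg_injective (congrArg Prod.snd (toLex.injective h)))

lemma roundLoser_spec {K : Finset V} (hK : K.Nonempty) :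
    roundLoser d idv K ∈ K ∧
      ∀ c ∈ K, elimKey d idv K (roundLoser d idv K) ≤ elimKey d idv K c := by
  rw [roundLoser, dif_pos hK]
  exact (K.exists_min_image _ hK).choose_spec

lemma roundLoser_eq_of_forall_le (hid : Function.Injective idv) {c : V} {K : Finset V}
    (hc : c ∈ K) (h : ∀ c' ∈ K, elimKey d idv K c ≤ elimKey d idv K c') :
    roundLoser d idv K = c :=
  have hspec := roundLoser_spec ⟨c, hc⟩
  elimKey_injective hid K (le_antisymm (hspec.2 c hc) (h _ hspec.1))

lemma plurality_le_plurality_of_subset (hid : Function.Injective idv) {K K' : Finset V}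
    (hKK' : K ⊆ K') {c : V} (hc : c ∈ K) :
    plurality d idv K' c ≤ plurality d idv K c := by
  refine Finset.card_le_card (Finset.monotone_filter_right _ fun x _ hx => ?_)
  have hdom : ∀ c' ∈ K', ∃ a ∈ K, voterKey d idv x a ≤ voterKey d idv x c' :=
    fun c' hc' => ⟨c, hc, hx ▸ (topChoice_spec x ⟨c, hKK' hc⟩).2 c' hc'⟩
  rw [← topChoice_eq_of_subset hid hKK' ⟨c, hc⟩ hdom, hx]

lemma roundLoser_eq_of_subset (hid : Function.Injective idv) {u : V} {K K' : Finset V}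
    (hKK' : K ⊆ K') (hu : u ∈ K) (hloser : roundLoser d idv K' = u)
    (hscore : plurality d idv K u ≤ plurality d idv K' u) :
    roundLoser d idv K = u := by
  refine roundLoser_eq_of_forall_le hid hu fun c hc => ?_
  have hold := (roundLoser_spec (d := d) (idv := idv) ⟨u, hKK' hu⟩).2 c (hKK' hc)
  rw [hloser] at hold
  have hc_score := plurality_le_plurality_of_subset (d := d) hid hKK' hc
  calc elimKey d idv K u ≤ elimKey d idv K' u :=
        Prod.Lex.toLex_mono (Prod.mk_le_mk.2 ⟨by exact_mod_cast hscore, le_rfl⟩)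
    _ ≤ elimKey d idv K' c := hold
    _ ≤ elimKey d idv K c :=
        Prod.Lex.toLex_mono (Prod.mk_le_mk.2 ⟨by exact_mod_cast hc_score, le_rfl⟩)

lemma irvWinner_of_two_le_card {K : Finset V} (h : 2 ≤ K.card) :
    irvWinner d idv K = irvWinner d idv (K.erase (roundLoser d idv K)) := by
  rw [irvWinner, dif_pos h]

lemma irvWinner_mem {K : Finset V} (hK : K.Nonempty) : irvWinner d idv K ∈ K := by
  induction K using Finset.strongInduction with
  | H K ih =>
    by_cases h : 2 ≤ K.card
    · have hl := roundLoser_mem d idv hK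
      rw [irvWinner_of_two_le_card h]
      refine Finset.erase_subset _ _ (ih _ (Finset.erase_ssubset hl) ?_)
      rw [← Finset.card_pos, Finset.card_erase_of_mem hl]
      omega
    · rw [irvWinner, dif_neg h, dif_pos hK]
      exact hK.choose_spec

lemma irvWinner_ne_of_roundLoser_eq {u : V} {K : Finset V} (h : 2 ≤ K.card)
    (hu : roundLoser d idv K = u) : irvWinner d idv K ≠ u := by
  have huK : u ∈ K := hu ▸ roundLoser_mem d idv (Finset.card_pos.1 (by omega))
  have hne : (K.erase u).Nonempty := by
    rw [← Finset.card_pos, Finset.card_erase_of_mem huK]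
    omega
  rw [irvWinner_of_two_le_card h, hu]
  exact Finset.ne_of_mem_erase (irvWinner_mem hne)

lemma exists_subset_roundLoser_eq {u : V} {K : Finset V} (hu : u ∈ K)
    (hw : irvWinner d idv K ≠ u) :
    ∃ K' ⊆ K, u ∈ K' ∧ roundLoser d idv K' = u ∧ irvWinner d idv K' ≠ u := by
  induction K using Finset.strongInduction with
  | H K ih =>
    by_cases hl : roundLoser d idv K = u
    · exact ⟨K, subset_rfl, hu, hl, hw⟩
    have h2 : 2 ≤ K.card := by
      by_contra h
      exact hw (Finset.card_le_one.1 (by omega) _ (irvWinner_mem ⟨u, hu⟩) u hu)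
    have hss := Finset.erase_ssubset (roundLoser_mem d idv ⟨u, hu⟩)
    rw [irvWinner_of_two_le_card h2] at hw
    obtain ⟨K', hK', huK', hl', hw'⟩ := ih _ hss (Finset.mem_erase.2 ⟨Ne.symm hl, hu⟩) hw
    exact ⟨K', hK'.trans hss.subset, huK', hl', hw'⟩

end IRV

lemma SimpleGraph.IsTree.topChoice_eq_of_forall_exists_isAncestor {V : Type*}
    [DecidableEq V] [Nonempty V] {G : SimpleGraph V} (hG : G.IsTree) {idv : V → ℕ}
    (hid : Function.Injective idv) {u x : V} {F K : Finset V} (hFK : insert u F ⊆ K)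
    (huF : u ∉ F) (hanc : ∀ c ∈ K, c ≠ u → ∃ a ∈ F, IsAncestor G.dist u a c)
    (hx : topChoice G.dist idv x (insert u F) = u) : topChoice G.dist idv x K = u := by
  rw [← hx]
  refine topChoice_eq_of_subset hid hFK (Finset.insert_nonempty u F) fun c hc => ?_
  by_cases hcu : c = u
  · exact ⟨c, hcu ▸ Finset.mem_insert_self u F, le_rfl⟩
  obtain ⟨a, haF, hac⟩ := hanc c hc hcu
  by_cases hac' : a = c
  · exact ⟨a, Finset.mem_insert_of_mem haF, hac' ▸ le_rfl⟩
  have hua := (topChoice_spec (d := G.dist) (idv := idv) x (Finset.insert_nonempty u F)).2 a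
    (Finset.mem_insert_of_mem haF)
  rw [hx] at hua
  have hlt := hG.dist_lt_of_isAncestor hac (ne_of_mem_of_not_mem haF huF) hac'
    (Prod.Lex.monotone_fst _ _ hua)
  exact ⟨u, Finset.mem_insert_self u F, (Prod.Lex.toLex_lt_toLex.2 (Or.inl hlt)).le⟩

theorem antichain_normal_form_general {V : Type*} [Fintype V] [DecidableEq V] [Nonempty V]
    (G : SimpleGraph V) (hG : G.IsTree)
    (idv : V → ℕ) (hid : Function.Injective idv)
    (u : V) (A : Set V)
    (hkill : Kill G.dist idv u A) :
    ∃ F : Finset V, ↑F ⊆ A ∧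
      (∀ a ∈ F, ∀ b ∈ F, a ≠ b → ¬ IsAncestor G.dist u a b) ∧
      irvWinner G.dist idv (insert u F) ≠ u ∧
      roundLoser G.dist idv (insert u F) = u := by
  obtain ⟨K₀, huK₀, hK₀A, hwin₀⟩ := hkill
  obtain ⟨K, hKK₀, huK, hloser, hwin⟩ := exists_subset_roundLoser_eq huK₀ hwin₀
  set F := ancestorMinimals G.dist u (K.erase u)
  have hF : F ⊆ K.erase u := ancestorMinimals_subset _ _ _
  have huF : u ∉ F := fun h => Finset.notMem_erase u K (hF h)
  have hFK : insert u F ⊆ K := Finset.insert_subset huK (hF.trans (Finset.erase_subset u K))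
  have hanc : ∀ c ∈ K, c ≠ u → ∃ a ∈ F, IsAncestor G.dist u a c := fun c hc hcu =>
    hG.connected.exists_mem_ancestorMinimals_isAncestor u (Finset.mem_erase.2 ⟨hcu, hc⟩)
  obtain ⟨a₀, ha₀, -⟩ := hanc _ (irvWinner_mem ⟨u, huK⟩) hwin
  have hscore : plurality G.dist idv (insert u F) u ≤ plurality G.dist idv K u :=
    Finset.card_le_card <| Finset.monotone_filter_right _ fun _ _ hx =>
      hG.topChoice_eq_of_forall_exists_isAncestor hid hFK huF hanc hx
  have hround := roundLoser_eq_of_subset hid hFK (Finset.mem_insert_self u F) hloser hscore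
  have hcard : 2 ≤ (insert u F).card := by
    rw [Finset.card_insert_of_notMem huF]
    have := Finset.card_pos.2 ⟨a₀, ha₀⟩
    omega
  refine ⟨F, fun a ha => ?_, fun a ha b hb hab => (mem_ancestorMinimals.1 hb).2 a (hF ha) hab,
    irvWinner_ne_of_roundLoser_eq hcard hround, hround⟩
  have ha' := Finset.mem_erase.1 (hF ha)
  exact (Set.mem_insert_iff.1 (hK₀A (hKK₀ ha'.2))).resolve_left ha'.1

/-- **Antichain normal form.** If `Kill(T,u,A)` holds then there is a witness set
`K = {u} ∪ F` with `F ⊆ A` an antichain w.r.t. the ancestor–descendant relation of `T`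
rooted at `u`, such that `u` loses and is eliminated in round 1. -/
theorem antichain_normal_form {V : Type*} [Fintype V] [DecidableEq V] [Nonempty V]
    (G : SimpleGraph V) (hG : G.IsTree)
    (idv : V → ℕ) (hid : Function.Injective idv)
    (u : V) (A : Set V) (hA : u ∉ A)
    (hkill : Kill G.dist idv u A) :
    ∃ F : Finset V, ↑F ⊆ A ∧
      (∀ a ∈ F, ∀ b ∈ F, a ≠ b → ¬ IsAncestor G.dist u a b) ∧
      irvWinner G.dist idv (insert u F) ≠ u ∧
      roundLoser G.dist idv (insert u F) = u :=
  antichain_normal_form_general G hG idv hid u A hkill
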